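/- Let E be a measurable space, μ a probability measure on E, and κ a Markov kernel on E acting on bounded measurable functions by (κ g)(x) = ∫_E g(y) κ(x,dy). Suppose that ‖κ g‖_{L²(μ)} ≤ ‖g‖_{L^{4/3}(μ)} for every bounded measurable g : E → ℝ. Then for every N ≥ 1 the N-fold product kernel κ^{⊗N} on E^N, defined by κ^{⊗N}((x₁,…,x_N),·) = κ(x₁,·) ⊗ ⋯ ⊗ κ(x_N,·), satisfies ‖κ^{⊗N} G‖_{L²(μ^{⊗N})} ≤ ‖G‖_{L^{4/3}(μ^{⊗N})} for every bounded measurable G : E^N → ℝ, where μ^{⊗N} is the N-fold product of μ. -/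

import Mathlib

/-!
Split `x ∈ E^(N+1)` as `(t, x')` with `t ∈ E`, `x' ∈ E^N`, and let
`F x' s = (κ^{⊗N} G(s, ·))(x')`, so that `(κ^{⊗(N+1)} G)(t, x') = (κ F(x', ·))(t)`.
Applying the one-dimensional hypothesis in `t` for each fixed `x'`, then Minkowski's integral
inequality to exchange the `L^{4/3}` norm in `s` with the `L²` norm in `x'` (possible because
`4/3 ≤ 2`), and finally the induction hypothesis for each fixed `s`, gives
`‖κ^{⊗(N+1)} G‖₂ ≤ ‖ ‖F(·, s)‖₂ ‖_{4/3} ≤ ‖ ‖G(s, ·)‖_{4/3} ‖_{4/3} = ‖G‖_{4/3}`.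
-/

open MeasureTheory ProbabilityTheory
open scoped ENNReal NNReal

/-- A bounded measurable real-valued function. -/
def BddMeasurableFn {E : Type*} [MeasurableSpace E] (f : E → ℝ) : Prop :=
  Measurable f ∧ ∃ C : ℝ, ∀ x, |f x| ≤ C

open Function

section FinCons

variable {E : Type*} [MeasurableSpace E] {n : ℕ}

theorem measurable_finCons :
    Measurable fun z : E × (Fin n → E) => (Fin.cons z.1 z.2 : Fin (n + 1) → E) := by
  refine measurable_pi_iff.2 fun i => ?_
  induction i using Fin.cases with
  | zero => exact measurable_fst
  | succ j => exact (measurable_pi_apply j).comp measurable_snd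

theorem measurePreserving_finCons (m : Fin (n + 1) → Measure E) [∀ i, SigmaFinite (m i)] :
    MeasurePreserving (fun z : E × (Fin n → E) => (Fin.cons z.1 z.2 : Fin (n + 1) → E))
      ((m 0).prod (Measure.pi fun i => m i.succ)) (Measure.pi m) := by
  convert (measurePreserving_piFinSuccAbove m 0).symm with z <;>
  simp [Fin.zero_succAbove, MeasurableEquiv.piFinSuccAbove_symm_apply, Fin.insertNthEquiv,
    Fin.insertNth_zero']

theorem integral_pi_finCons {F : Type*} [NormedAddCommGroup F] [NormedSpace ℝ F]
    (m : Fin (n + 1) → Measure E) [∀ i, SigmaFinite (m i)] {G : (Fin (n + 1) → E) → F}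
    (hG : Integrable G (Measure.pi m)) :
    ∫ x, G x ∂(Measure.pi m)
      = ∫ t, ∫ y, G (Fin.cons t y) ∂(Measure.pi fun i => m i.succ) ∂(m 0) := by
  have hmp := measurePreserving_finCons m
  rw [← hmp.map_eq,
    integral_map hmp.measurable.aemeasurable (hmp.map_eq ▸ hG.aestronglyMeasurable)]
  exact integral_prod _ ((hmp.integrable_comp hG.aestronglyMeasurable).2 hG)

end FinCons

namespace ProbabilityTheory.Kernel

section Pi

variable {α ι : Type*} [Fintype ι] {β : ι → Type*} [MeasurableSpace α]
  [∀ i, MeasurableSpace (β i)]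

theorem measurable_measure_pi (κ : ∀ i, Kernel α (β i)) [∀ i, IsFiniteKernel (κ i)] :
    Measurable fun a => Measure.pi fun i => κ i a := by
  refine .measure_of_isPiSystem generateFrom_pi.symm isPiSystem_pi ?_ ?_
  · rintro _ ⟨s, hs, rfl⟩
    simp_rw [Measure.pi_pi]
    exact Finset.measurable_prod _ fun i _ => κ i |>.measurable_coe (hs i trivial)
  · simp_rw [Measure.pi_univ]
    exact Finset.measurable_prod _ fun i _ => κ i |>.measurable_coe .univ

noncomputable def pi (κ : ∀ i, Kernel α (β i)) [∀ i, IsFiniteKernel (κ i)] :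
    Kernel α (∀ i, β i) where
  toFun a := Measure.pi fun i => κ i a
  measurable' := measurable_measure_pi κ

@[simp]
theorem pi_apply (κ : ∀ i, Kernel α (β i)) [∀ i, IsFiniteKernel (κ i)] (a : α) :
    Kernel.pi κ a = Measure.pi fun i => κ i a :=
  rfl

instance (κ : ∀ i, Kernel α (β i)) [∀ i, IsFiniteKernel (κ i)] : IsFiniteKernel (Kernel.pi κ) :=
  ⟨⟨∏ i, (κ i).bound, ENNReal.prod_lt_top fun i _ => (κ i).bound_lt_top, fun a => by
    rw [pi_apply, Measure.pi_univ]
    exact Finset.prod_le_prod' fun i _ => (κ i).measure_le_bound a _⟩⟩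

end Pi

section TensorPow

variable {E : Type*} [MeasurableSpace E] (κ : Kernel E E) (ι : Type*) [Fintype ι]

noncomputable def tensorPow [IsFiniteKernel κ] : Kernel (ι → E) (ι → E) :=
  Kernel.pi fun i => κ.comap (fun x => x i) (measurable_pi_apply i)

@[simp]
theorem tensorPow_apply [IsFiniteKernel κ] (x : ι → E) :
    κ.tensorPow ι x = Measure.pi fun i => κ (x i) :=
  rfl

instance [IsFiniteKernel κ] : IsFiniteKernel (κ.tensorPow ι) := by
  unfold tensorPow; infer_instance

instance [IsMarkovKernel κ] : IsMarkovKernel (κ.tensorPow ι) :=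
  ⟨fun x => by rw [tensorPow_apply]; infer_instance⟩

variable {F : Type*} [NormedAddCommGroup F] [NormedSpace ℝ F] [IsFiniteKernel κ] {N : ℕ}
  {G : (Fin (N + 1) → E) → F}

theorem stronglyMeasurable_integral_tensorPow_finCons (hG : StronglyMeasurable G) :
    StronglyMeasurable (uncurry fun x' s => ∫ y, G (Fin.cons s y) ∂(κ.tensorPow (Fin N) x')) :=
  StronglyMeasurable.integral_kernel_prod_right
    (κ := (κ.tensorPow (Fin N)).comap Prod.fst measurable_fst) (f := fun z y => G (Fin.cons z.2 y))
    (hG.comp_measurable (measurable_finCons.comp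
      ((measurable_snd.comp measurable_fst).prodMk measurable_snd)))

theorem integral_tensorPow_finCons (t : E) (x' : Fin N → E)
    (hG : Integrable G (κ.tensorPow (Fin (N + 1)) (Fin.cons t x'))) :
    ∫ y, G y ∂(κ.tensorPow (Fin (N + 1)) (Fin.cons t x'))
      = ∫ s, ∫ y, G (Fin.cons s y) ∂(κ.tensorPow (Fin N) x') ∂(κ t) := by
  rw [tensorPow_apply] at hG ⊢
  rw [integral_pi_finCons _ hG]
  simp

end TensorPow

end ProbabilityTheory.Kernel

section Fubini

variable {α β E : Type*} [MeasurableSpace α] [MeasurableSpace β] [NormedAddCommGroup E]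
  {μ : Measure α} {ν : Measure β} [SFinite ν] {p : ℝ≥0∞}

theorem eLpNorm_prod_eq_eLpNorm_eLpNorm (hp0 : p ≠ 0) (hp : p ≠ ∞) {f : α × β → E}
    (hf : AEStronglyMeasurable f (μ.prod ν)) :
    eLpNorm f p (μ.prod ν) = eLpNorm (fun x => eLpNorm (fun y => f (x, y)) p ν) p μ := by
  have hp' : 0 < p.toReal := ENNReal.toReal_pos hp0 hp
  simp only [eLpNorm_eq_lintegral_rpow_enorm_toReal hp0 hp, enorm_eq_self]
  rw [lintegral_prod _ (hf.enorm.pow_const _)]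
  congr 1
  refine lintegral_congr fun x => ?_
  rw [← ENNReal.rpow_mul, one_div_mul_cancel hp'.ne', ENNReal.rpow_one]

theorem eLpNorm_prod_eq_eLpNorm_eLpNorm_swap [SFinite μ] (hp0 : p ≠ 0) (hp : p ≠ ∞)
    {f : α × β → E} (hf : AEStronglyMeasurable f (μ.prod ν)) :
    eLpNorm f p (μ.prod ν) = eLpNorm (fun y => eLpNorm (fun x => f (x, y)) p μ) p ν := by
  have hp' : 0 < p.toReal := ENNReal.toReal_pos hp0 hp
  simp only [eLpNorm_eq_lintegral_rpow_enorm_toReal hp0 hp, enorm_eq_self]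
  rw [lintegral_prod_symm _ (hf.enorm.pow_const _)]
  congr 1
  refine lintegral_congr fun y => ?_
  rw [← ENNReal.rpow_mul, one_div_mul_cancel hp'.ne', ENNReal.rpow_one]

end Fubini

section Minkowski

variable {α β : Type*} [MeasurableSpace α] [MeasurableSpace β]
  {μ : Measure α} {ν : Measure β}

theorem ENNReal.lintegral_minkowski [SFinite μ] [SFinite ν] {r : ℝ} (hr : 1 ≤ r)
    {f : α → β → ℝ≥0∞} (hf : Measurable (uncurry f))
    (hfin : ∫⁻ x, (∫⁻ y, f x y ∂ν) ^ r ∂μ ≠ ∞) :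
    (∫⁻ x, (∫⁻ y, f x y ∂ν) ^ r ∂μ) ^ (1 / r)
      ≤ ∫⁻ y, (∫⁻ x, f x y ^ r ∂μ) ^ (1 / r) ∂ν := by
  rcases hr.eq_or_lt with rfl | hr
  · simpa only [ENNReal.rpow_one, div_one] using (lintegral_lintegral_swap hf.aemeasurable).le
  have hrr' := Real.HolderConjugate.conjExponent hr
  set r' := r.conjExponent
  set I := fun x => ∫⁻ y, f x y ∂ν
  set A := ∫⁻ x, I x ^ r ∂μ
  set B := ∫⁻ y, (∫⁻ x, f x y ^ r ∂μ) ^ (1 / r) ∂ν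
  have hI : Measurable I := hf.lintegral_prod_right'
  -- Write `I ^ r = I ^ (r - 1) * I`, swap the integrals, apply Hölder with exponents `(r', r)`
  -- in `x` for each `y`, and divide the resulting `A ≤ A ^ (1 / r') * B` by `A ^ (1 / r')`.
  have hholder (y : β) : ∫⁻ x, I x ^ (r - 1) * f x y ∂μ
      ≤ A ^ (1 / r') * (∫⁻ x, f x y ^ r ∂μ) ^ (1 / r) := by
    have := ENNReal.lintegral_mul_le_Lp_mul_Lq μ hrr'.symm (hI.pow_const (r - 1)).aemeasurable
      (hf.of_uncurry_right (y := y)).aemeasurable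
    simpa only [Pi.mul_apply, ← ENNReal.rpow_mul, hrr'.sub_one_mul_conj] using this
  have key : A ≤ A ^ (1 / r') * B := calc
    A = ∫⁻ x, ∫⁻ y, I x ^ (r - 1) * f x y ∂ν ∂μ := lintegral_congr fun x => by
        rw [lintegral_const_mul _ hf.of_uncurry_left]
        conv_lhs => rw [← sub_add_cancel r 1]
        rw [ENNReal.rpow_add_of_nonneg _ _ (by linarith) zero_le_one, ENNReal.rpow_one]
    _ = ∫⁻ y, ∫⁻ x, I x ^ (r - 1) * f x y ∂μ ∂ν :=
        lintegral_lintegral_swap (((hI.comp measurable_fst).pow_const _).mul hf).aemeasurable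
    _ ≤ ∫⁻ y, A ^ (1 / r') * (∫⁻ x, f x y ^ r ∂μ) ^ (1 / r) ∂ν := lintegral_mono hholder
    _ = A ^ (1 / r') * B :=
        lintegral_const_mul _ ((hf.pow_const r).lintegral_prod_left'.pow_const _)
  rcases eq_or_ne A 0 with hA0 | hA0
  · simp [hA0, hrr'.pos]
  have hsplit : A = A ^ (1 / r) * A ^ (1 / r') := by
    rw [← ENNReal.rpow_add _ _ hA0 hfin, hrr'.one_div_add_one_div, div_one, ENNReal.rpow_one]
  refine (ENNReal.mul_le_mul_iff_left (c := A ^ (1 / r'))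
    (ENNReal.rpow_pos (pos_iff_ne_zero.2 hA0) hfin).ne'
    (ENNReal.rpow_ne_top_of_nonneg hrr'.symm.one_div_nonneg hfin)).1 ?_
  rwa [← hsplit, mul_comm B]

variable {E : Type*} [NormedAddCommGroup E]

theorem eLpNorm_eLpNorm_le_eLpNorm_eLpNorm [SFinite μ] [SFinite ν] {p q : ℝ≥0∞}
    (hp : p ≠ 0) (hpq : p ≤ q) (hq : q ≠ ∞) {f : α → β → E}
    (hf : StronglyMeasurable (uncurry f))
    (hfin : eLpNorm (fun x => eLpNorm (f x) p ν) q μ ≠ ∞) :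
    eLpNorm (fun x => eLpNorm (f x) p ν) q μ
      ≤ eLpNorm (fun y => eLpNorm (fun x => f x y) q μ) p ν := by
  have hp' : p ≠ ∞ := ne_top_of_le_ne_top hq hpq
  have hq0 : q ≠ 0 := (lt_of_lt_of_le (pos_iff_ne_zero.2 hp) hpq).ne'
  have hP : 0 < p.toReal := ENNReal.toReal_pos hp hp'
  have hr : 1 ≤ q.toReal / p.toReal := (one_le_div hP).2 (ENNReal.toReal_mono hq hpq)
  -- Minkowski's inequality for `‖f‖ₑ ^ p` with the exponent `r = q / p`.
  set r := q.toReal / p.toReal with hr_def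
  set g := fun x y => ‖f x y‖ₑ ^ p.toReal
  have hg : Measurable (uncurry g) := hf.enorm.pow_const _
  have hLHS : eLpNorm (fun x => eLpNorm (f x) p ν) q μ
      = ((∫⁻ x, (∫⁻ y, g x y ∂ν) ^ r ∂μ) ^ (1 / r)) ^ (1 / p.toReal) := by
    simp only [eLpNorm_eq_lintegral_rpow_enorm_toReal hp hp',
      eLpNorm_eq_lintegral_rpow_enorm_toReal hq0 hq, enorm_eq_self, g, ← ENNReal.rpow_mul]
    congr 1
    · congr 1; funext x; congr 1; rw [hr_def]; field_simp
    · rw [hr_def]; field_simp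
  have hRHS : eLpNorm (fun y => eLpNorm (fun x => f x y) q μ) p ν
      = (∫⁻ y, (∫⁻ x, g x y ^ r ∂μ) ^ (1 / r) ∂ν) ^ (1 / p.toReal) := by
    simp only [eLpNorm_eq_lintegral_rpow_enorm_toReal hp hp',
      eLpNorm_eq_lintegral_rpow_enorm_toReal hq0 hq, enorm_eq_self, g, ← ENNReal.rpow_mul]
    congr 1
    refine lintegral_congr fun y => ?_
    congr 1
    · congr 1; funext x; congr 1; rw [hr_def]; field_simp
    · rw [hr_def]; field_simp
  rw [hLHS] at hfin ⊢
  rw [hRHS]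
  refine ENNReal.rpow_le_rpow
    (ENNReal.lintegral_minkowski hr hg fun htop => hfin ?_) (by positivity)
  rw [htop, ENNReal.top_rpow_of_pos (one_div_pos.2 (zero_lt_one.trans_le hr)),
    ENNReal.top_rpow_of_pos (by positivity)]

theorem eLpNorm_eLpNorm_ne_top_of_bound [IsFiniteMeasure μ] [IsFiniteMeasure ν]
    (p q : ℝ≥0∞) {f : α → β → E} {C : ℝ} (hC : ∀ x y, ‖f x y‖ ≤ C) :
    eLpNorm (fun x => eLpNorm (f x) p ν) q μ ≠ ∞ := by
  refine ne_top_of_le_ne_top ?_ (eLpNorm_mono_enorm (g := fun _ => eLpNorm (fun _ => C) p ν)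
    fun x => eLpNorm_mono_real (hC x))
  exact (memLp_const_enorm (memLp_const C).eLpNorm_ne_top).eLpNorm_ne_top

end Minkowski

section Tensorization

variable {E : Type*} [MeasurableSpace E] {N : ℕ}

theorem BddMeasurableFn.comp_finCons {G : (Fin (N + 1) → E) → ℝ} (hG : BddMeasurableFn G)
    (s : E) : BddMeasurableFn fun y : Fin N → E => G (Fin.cons s y) :=
  ⟨hG.1.comp (measurable_finCons.comp measurable_prodMk_left), hG.2.imp fun _ hC _ => hC _⟩

variable {μ : Measure E} [IsProbabilityMeasure μ] {κ : Kernel E E} [IsMarkovKernel κ]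
  {p q : ℝ≥0∞}

theorem eLpNorm_integral_tensorPow_succ_le (hp : p ≠ 0) (hpq : p ≤ q) (hq : q ≠ ∞)
    (h : ∀ g : E → ℝ, BddMeasurableFn g →
      eLpNorm (fun x => ∫ y, g y ∂(κ x)) q μ ≤ eLpNorm g p μ)
    (ih : ∀ G : (Fin N → E) → ℝ, BddMeasurableFn G →
      eLpNorm (fun x => ∫ y, G y ∂(κ.tensorPow (Fin N) x)) q (Measure.pi fun _ => μ)
        ≤ eLpNorm G p (Measure.pi fun _ => μ))
    {G : (Fin (N + 1) → E) → ℝ} (hG : BddMeasurableFn G) :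
    eLpNorm (fun x => ∫ y, G y ∂(κ.tensorPow (Fin (N + 1)) x)) q (Measure.pi fun _ => μ)
      ≤ eLpNorm G p (Measure.pi fun _ => μ) := by
  have hp' : p ≠ ∞ := ne_top_of_le_ne_top hq hpq
  have hq0 : q ≠ 0 := (lt_of_lt_of_le (pos_iff_ne_zero.2 hp) hpq).ne'
  obtain ⟨hGm, C, hC⟩ := hG
  set F : (Fin N → E) → E → ℝ := fun x' s => ∫ y, G (Fin.cons s y) ∂(κ.tensorPow (Fin N) x')
  have hFm : StronglyMeasurable (uncurry F) :=
    κ.stronglyMeasurable_integral_tensorPow_finCons hGm.stronglyMeasurable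
  have hFC (x' : Fin N → E) (s : E) : ‖F x' s‖ ≤ C := by
    have hbound := norm_integral_le_of_norm_le_const (μ := κ.tensorPow (Fin N) x')
      (f := fun y => G (Fin.cons s y)) (.of_forall fun y => (Real.norm_eq_abs _).trans_le (hC _))
    rwa [probReal_univ, mul_one] at hbound
  have hT : StronglyMeasurable fun x => ∫ y, G y ∂(κ.tensorPow (Fin (N + 1)) x) :=
    hGm.stronglyMeasurable.integral_kernel
  have hcons := measurePreserving_finCons fun _ : Fin (N + 1) => μ
  calc eLpNorm (fun x => ∫ y, G y ∂(κ.tensorPow (Fin (N + 1)) x)) q (Measure.pi fun _ => μ)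
      = eLpNorm (fun x' => eLpNorm (fun t => ∫ s, F x' s ∂(κ t)) q μ) q
          (Measure.pi fun _ => μ) := by
        rw [← eLpNorm_comp_measurePreserving hT.aestronglyMeasurable hcons,
          eLpNorm_prod_eq_eLpNorm_eLpNorm_swap hq0 hq
            (hT.comp_measurable hcons.measurable).aestronglyMeasurable]
        simp only [comp_apply, κ.integral_tensorPow_finCons _ _
          (.of_bound hGm.aestronglyMeasurable C (.of_forall hC)), F]
    _ ≤ eLpNorm (fun x' => eLpNorm (F x') p μ) q (Measure.pi fun _ => μ) :=
        eLpNorm_mono_enorm fun x' => by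
          simpa using h (F x') ⟨hFm.measurable.comp measurable_prodMk_left, C, hFC x'⟩
    _ ≤ eLpNorm (fun s => eLpNorm (fun x' => F x' s) q (Measure.pi fun _ => μ)) p μ :=
        eLpNorm_eLpNorm_le_eLpNorm_eLpNorm hp hpq hq hFm
          (eLpNorm_eLpNorm_ne_top_of_bound p q hFC)
    _ ≤ eLpNorm (fun s => eLpNorm (fun y => G (Fin.cons s y)) p (Measure.pi fun _ => μ)) p μ :=
        eLpNorm_mono_enorm fun s => ih _ (BddMeasurableFn.comp_finCons ⟨hGm, C, hC⟩ s)
    _ = eLpNorm G p (Measure.pi fun _ => μ) := by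
        rw [← eLpNorm_comp_measurePreserving hGm.aestronglyMeasurable hcons,
          eLpNorm_prod_eq_eLpNorm_eLpNorm hp hp'
            (hGm.comp hcons.measurable).aestronglyMeasurable]
        rfl

theorem eLpNorm_integral_tensorPow_le (hp : p ≠ 0) (hpq : p ≤ q) (hq : q ≠ ∞)
    (h : ∀ g : E → ℝ, BddMeasurableFn g →
      eLpNorm (fun x => ∫ y, g y ∂(κ x)) q μ ≤ eLpNorm g p μ)
    (N : ℕ) (G : (Fin N → E) → ℝ) (hG : BddMeasurableFn G) :
    eLpNorm (fun x => ∫ y, G y ∂(κ.tensorPow (Fin N) x)) q (Measure.pi fun _ => μ)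
      ≤ eLpNorm G p (Measure.pi fun _ => μ) := by
  induction N with
  | zero =>
    have hconst : G = fun _ => G default := funext fun y => congrArg G (Subsingleton.elim y _)
    have hT : (fun x => ∫ y, G y ∂(κ.tensorPow (Fin 0) x)) = fun _ => G default := by
      funext x; rw [hconst]; simp
    have hq0 : q ≠ 0 := (lt_of_lt_of_le (pos_iff_ne_zero.2 hp) hpq).ne'
    rw [hT, hconst, eLpNorm_const _ hq0 (NeZero.ne _), eLpNorm_const _ hp (NeZero.ne _)]
    simp
  | succ N ih => exact eLpNorm_integral_tensorPow_succ_le hp hpq hq h ih hG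

end Tensorization

theorem statement_3 (E : Type) [MeasurableSpace E] (μ : Measure E) [IsProbabilityMeasure μ]
    (κ : Kernel E E) [IsMarkovKernel κ]
    (h : ∀ g : E → ℝ, BddMeasurableFn g →
      eLpNorm (fun x => ∫ y, g y ∂(κ x)) 2 μ ≤ eLpNorm g (4 / 3 : ℝ≥0∞) μ) :
    ∀ N : ℕ, 1 ≤ N → ∀ G : (Fin N → E) → ℝ, BddMeasurableFn G →
      eLpNorm (fun x : Fin N → E => ∫ y, G y ∂(Measure.pi fun i => κ (x i))) 2
          (Measure.pi fun _ : Fin N => μ)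
        ≤ eLpNorm G (4 / 3 : ℝ≥0∞) (Measure.pi fun _ : Fin N => μ) :=
  fun N _ G hG => eLpNorm_integral_tensorPow_le (by norm_num)
    (ENNReal.div_le_of_le_mul (by norm_num)) (by norm_num) h N G hG
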